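/- Let γ ∈ ℝ and suppose y : [0,∞) → ℝ^d is continuous and of bounded variation, and Ȳ : [0,∞) → ℝ^d is continuous. If Y(t) = e^{-γt} Y(0) + ∫₀ᵗ e^{-γ(t-s)} dy(s) + γ ∫₀ᵗ e^{-γ(t-s)} Ȳ(s) ds, then Y satisfies Y(t) = Y(0) + y(t) − y(0) + γ ∫₀ᵗ (Ȳ(s) − Y(s)) ds for all t ≥ 0. -/

import Mathlib

open intervalIntegral

/-!
Writing `e^{-γ(t-s)} = e^{-γt} e^{γs}`, the hypothesis says `Y(t) = e^{-γt} W(t)` with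
`W(t) = Y(0) + ∫₀ᵗ e^{γs} (y'(s) + γ Ȳ(s)) ds`. By the product rule `Y' = y' + γ (Ȳ - Y)`,
and integrating this from `0` to `t` gives the claim.
-/

variable {E : Type*} [NormedAddCommGroup E] [NormedSpace ℝ E]

theorem integral_exp_mul_sub_smul (γ a b t : ℝ) (f : ℝ → E) :
    ∫ s in a..b, Real.exp (-γ * (t - s)) • f s
      = Real.exp (-γ * t) • ∫ s in a..b, Real.exp (γ * s) • f s := by
  rw [← integral_smul]
  refine integral_congr fun s _ => ?_
  simp only [smul_smul, ← Real.exp_add]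
  ring_nf

/-- A mild solution of `Y' = f - γ Y` is a classical solution. -/
theorem hasDerivAt_of_eq_exp_smul_add_integral [CompleteSpace E] {γ : ℝ} {c : E} {f Y : ℝ → E}
    (hf : Continuous f)
    (hY : ∀ t, Y t = Real.exp (-γ * t) • c + ∫ s in (0:ℝ)..t, Real.exp (-γ * (t - s)) • f s)
    (t : ℝ) : HasDerivAt Y (f t - γ • Y t) t := by
  set W : ℝ → E := fun u => c + ∫ s in (0:ℝ)..u, Real.exp (γ * s) • f s
  have hYW : Y = fun u => Real.exp (-γ * u) • W u := by
    funext u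
    rw [hY u, integral_exp_mul_sub_smul, smul_add]
  have hW : HasDerivAt W (Real.exp (γ * t) • f t) t := by
    have hcont : Continuous fun s => Real.exp (γ * s) • f s := by fun_prop
    exact (integral_hasDerivAt_right (hcont.intervalIntegrable 0 t)
      (hcont.stronglyMeasurableAtFilter _ _) hcont.continuousAt).const_add c
  have hexp : HasDerivAt (fun u => Real.exp (-γ * u)) (Real.exp (-γ * t) * -γ) t := by
    simpa using ((hasDerivAt_id t).const_mul (-γ)).exp
  rw [hYW]
  refine (hexp.smul hW).congr_deriv ?_
  rw [smul_smul, ← Real.exp_add, show -γ * t + γ * t = 0 by ring, Real.exp_zero, one_smul,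
    mul_comm, ← smul_smul, neg_smul]
  abel

/-- If Y(t) = e^{-γt} Y(0) + ∫₀ᵗ e^{-γ(t-s)} dy(s) + γ∫₀ᵗ e^{-γ(t-s)} Ȳ(s) ds,
with y a continuously differentiable (bounded variation) path so that the Riemann–Stieltjes
integral is ∫₀ᵗ e^{-γ(t-s)} y'(s) ds, then Y(t) = Y(0) + y(t) − y(0) + γ∫₀ᵗ (Ȳ(s) − Y(s)) ds. -/
theorem stmt_6 (d : ℕ) (γ : ℝ) (y y' Ybar Y : ℝ → EuclideanSpace ℝ (Fin d))
    (hy : ∀ s, HasDerivAt y (y' s) s) (hy' : Continuous y') (hYbar : Continuous Ybar)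
    (hY : ∀ t, Y t = Real.exp (-γ * t) • Y 0
        + (∫ s in (0:ℝ)..t, Real.exp (-γ * (t - s)) • y' s)
        + γ • ∫ s in (0:ℝ)..t, Real.exp (-γ * (t - s)) • Ybar s) :
    ∀ t ≥ (0:ℝ), Y t = Y 0 + y t - y 0 + γ • ∫ s in (0:ℝ)..t, (Ybar s - Y s) := by
  have hmild : ∀ t, Y t = Real.exp (-γ * t) • Y 0
      + ∫ s in (0:ℝ)..t, Real.exp (-γ * (t - s)) • (y' s + γ • Ybar s) := by
    intro t
    simp_rw [smul_add, smul_comm _ γ]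
    rw [integral_add, integral_smul, hY t, add_assoc] <;>
      exact Continuous.intervalIntegrable (by fun_prop) _ _
  have hderiv : ∀ t, HasDerivAt Y (y' t + γ • (Ybar t - Y t)) t := fun t => by
    simpa only [smul_sub, add_sub_assoc] using
      hasDerivAt_of_eq_exp_smul_add_integral (f := fun s => y' s + γ • Ybar s)
        (hy'.add (hYbar.const_smul γ)) hmild t
  have hYcont : Continuous Y := continuous_iff_continuousAt.2 fun t => (hderiv t).continuousAt
  intro t _
  have hFTC := integral_eq_sub_of_hasDerivAt (fun s _ => hderiv s)
    (Continuous.intervalIntegrable (by fun_prop) 0 t)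
  rw [integral_add (hy'.intervalIntegrable 0 t)
      (Continuous.intervalIntegrable (by fun_prop) _ _),
    integral_eq_sub_of_hasDerivAt (fun s _ => hy s) (hy'.intervalIntegrable 0 t),
    integral_smul] at hFTC
  rw [eq_add_of_sub_eq' hFTC.symm]
  abel
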